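/- arXiv:2503.09676 — 3 statements merged into one kernel-verified Lean document; each statement's English description precedes it below -/
import Mathlib

section
/- With x = vec(X) for a permutation matrix X, z₁, z₂ distinct elements of supp(x), and z₃, z₄ defined by the quadruple bit-flip rule, the resulting vector y = x − e_{z₁} − e_{z₂} + e_{z₃} + e_{z₄} equals vec(X'), where X' is obtained from X by swapping columns ⌊z₁/n⌋ and ⌊z₂/n⌋. -/
/-!
Under the column-major identification `z ↔ (⌊z/n⌋, z mod n)` of `Fin (n * n)` with (column, row)
pairs, `z₁ = (c₁, σ c₁)` and `z₂ = (c₂, σ c₂)` are the nonzero entries of columns `c₁` and `c₂`,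
and the bit-flip rule gives `z₃ = (c₂, σ c₁)`, `z₄ = (c₁, σ c₂)`. Swapping columns `c₁`, `c₂` of a
matrix whose column `c` is the unit vector `e_{σ c}` moves exactly these four ones; when
`c₁ = c₂` the four corrections cancel.
-/

open Matrix

theorem finProdFinEquiv_symm_eq_of_val_eq {m n : ℕ} {z : Fin (m * n)} {c : Fin m} {r : Fin n}
    (h : (z : ℕ) = c * n + r) : finProdFinEquiv.symm z = (c, r) := by
  rw [Equiv.symm_apply_eq]
  ext
  simp only [h, finProdFinEquiv_apply_val]
  ring

theorem of_ite_submatrix_id_swap {ι κ R : Type*} [DecidableEq ι] [DecidableEq κ] [Ring R]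
    (σ : κ → ι) (c₁ c₂ : κ) :
    (of fun r c => if r = σ c then (1 : R) else 0).submatrix id (Equiv.swap c₁ c₂) =
      of (fun r c => if r = σ c then 1 else 0) - single (σ c₁) c₁ 1 - single (σ c₂) c₂ 1
        + single (σ c₁) c₂ 1 + single (σ c₂) c₁ 1 := by
  ext r c
  simp only [submatrix_apply, id, of_apply, Matrix.add_apply, Matrix.sub_apply, single_apply,
    @eq_comm _ _ r]
  rcases eq_or_ne c c₁ with rfl | h₁
  · rcases eq_or_ne c c₂ with rfl | h₂
    · simp
    · simp [h₂.symm]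
  · rcases eq_or_ne c c₂ with rfl | h₂
    · simp [h₁.symm]
    · simp [h₁.symm, h₂.symm, Equiv.swap_apply_of_ne_of_ne h₁ h₂]

theorem quadrupleFlip_eq_columnSwap_general {n : ℕ} (X : Matrix (Fin n) (Fin n) ℝ)
    (σ : Equiv.Perm (Fin n)) (hX : ∀ r c, X r c = if r = σ c then 1 else 0)
    (x : Fin (n * n) → ℝ) (hx : ∀ z : Fin (n * n), x z = X z.modNat z.divNat)
    (z₁ z₂ z₃ z₄ : Fin (n * n))
    (h1 : x z₁ ≠ 0) (h2 : x z₂ ≠ 0)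
    (h3 : (z₃ : ℕ) = (z₂ : ℕ) / n * n + (z₁ : ℕ) % n)
    (h4 : (z₄ : ℕ) = (z₁ : ℕ) / n * n + (z₂ : ℕ) % n) :
    ∀ z : Fin (n * n),
      ((x - Pi.single z₁ 1 - Pi.single z₂ 1 + Pi.single z₃ 1 + Pi.single z₄ 1 :
          Fin (n * n) → ℝ)) z
        = X z.modNat (Equiv.swap z₁.divNat z₂.divNat z.divNat) := by
  have hr₁ : z₁.modNat = σ z₁.divNat := by simpa [hx, hX] using h1
  have hr₂ : z₂.modNat = σ z₂.divNat := by simpa [hx, hX] using h2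
  obtain rfl : X = of fun r c => if r = σ c then 1 else 0 := Matrix.ext hX
  have hvec : x = vec (of fun r c => if r = σ c then (1 : ℝ) else 0) ∘ finProdFinEquiv.symm :=
    funext hx
  have hsingle (w : Fin (n * n)) : (Pi.single w 1 : Fin (n * n) → ℝ) =
      Pi.single (finProdFinEquiv.symm w) 1 ∘ finProdFinEquiv.symm := by
    rw [Pi.single_comp_equiv, Equiv.symm_symm, Equiv.apply_symm_apply]
  have he₃ : finProdFinEquiv.symm z₃ = (z₂.divNat, z₁.modNat) :=
    finProdFinEquiv_symm_eq_of_val_eq h3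
  have he₄ : finProdFinEquiv.symm z₄ = (z₁.divNat, z₂.modNat) :=
    finProdFinEquiv_symm_eq_of_val_eq h4
  suffices x - Pi.single z₁ 1 - Pi.single z₂ 1 + Pi.single z₃ 1 + Pi.single z₄ 1 =
      vec ((of fun r c => if r = σ c then (1 : ℝ) else 0).submatrix id
        (Equiv.swap z₁.divNat z₂.divNat)) ∘ finProdFinEquiv.symm from congr_fun this
  rw [of_ite_submatrix_id_swap, hvec, hsingle, hsingle, hsingle, hsingle, he₃, he₄]
  simp only [finProdFinEquiv_symm_apply, hr₁, hr₂, vec_add, vec_sub, vec_single]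
  rfl

/-- The quadruple bit-flip of `x = vec(X)` equals the vectorization of the matrix
obtained from `X` by swapping columns `⌊z₁/n⌋` and `⌊z₂/n⌋`. -/
theorem quadrupleFlip_eq_columnSwap {n : ℕ} (X : Matrix (Fin n) (Fin n) ℝ)
    (σ : Equiv.Perm (Fin n)) (hX : ∀ r c, X r c = if r = σ c then 1 else 0)
    (x : Fin (n * n) → ℝ) (hx : ∀ z : Fin (n * n), x z = X z.modNat z.divNat)
    (z₁ z₂ z₃ z₄ : Fin (n * n))
    (h1 : x z₁ ≠ 0) (h2 : x z₂ ≠ 0) (hne : z₁ ≠ z₂)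
    (h3 : (z₃ : ℕ) = (z₂ : ℕ) / n * n + (z₁ : ℕ) % n)
    (h4 : (z₄ : ℕ) = (z₁ : ℕ) / n * n + (z₂ : ℕ) % n) :
    ∀ z : Fin (n * n),
      ((x - Pi.single z₁ 1 - Pi.single z₂ 1 + Pi.single z₃ 1 + Pi.single z₄ 1 :
          Fin (n * n) → ℝ)) z
        = X z.modNat (Equiv.swap z₁.divNat z₂.divNat z.divNat) :=
  quadrupleFlip_eq_columnSwap_general X σ hX x hx z₁ z₂ z₃ z₄ h1 h2 h3 h4
end

section
/- Let D ∈ ℝ^{n×n}, F ∈ 𝕊ⁿ, Q = (1/2)(D⊗F) + (1/2)(D⊗F)ᵀ, x = vec(X) for a permutation matrix X, and y = x − e_{z₁} − e_{z₂} + e_{z₃} + e_{z₄} a quadruple bit-flip neighbour of x. Assume D and F have zero diagonals. Then yᵀQy − xᵀQx = 2[Q(z₃,:)y + Q(z₄,:)y − Q(z₁,:)x − Q(z₂,:)x]. -/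
open Matrix Kronecker

def IsPermVec {n : ℕ} (x : Fin (n * n) → ℝ) : Prop :=
  ∃ σ : Equiv.Perm (Fin n), ∀ z : Fin (n * n),
    x z = if z.modNat = σ z.divNat then 1 else 0

def Qflat {n : ℕ} (D F : Matrix (Fin n) (Fin n) ℝ) :
    Matrix (Fin (n * n)) (Fin (n * n)) ℝ :=
  Matrix.reindex finProdFinEquiv finProdFinEquiv (D ⊗ₖ F)

/-- Proposition 1: for a semi-symmetric instance with zero diagonals,
`yᵀQy − xᵀQx = 2[Q(z₃,:)y + Q(z₄,:)y − Q(z₁,:)x − Q(z₂,:)x]`. -/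
theorem semiSymm_energy_diff {n : ℕ}
    (D F : Matrix (Fin n) (Fin n) ℝ) (hF : Fᵀ = F)
    (hDd : ∀ i, D i i = 0) (hFd : ∀ i, F i i = 0)
    (Q : Matrix (Fin (n * n)) (Fin (n * n)) ℝ)
    (hQ : Q = ((1 : ℝ) / 2) • Qflat D F + ((1 : ℝ) / 2) • (Qflat D F)ᵀ)
    (x : Fin (n * n) → ℝ) (hx : IsPermVec x)
    (z₁ z₂ z₃ z₄ : Fin (n * n))
    (h1 : x z₁ = 1) (h2 : x z₂ = 1) (hne : z₁ ≠ z₂)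
    (h3 : (z₃ : ℕ) = (z₂ : ℕ) / n * n + (z₁ : ℕ) % n)
    (h4 : (z₄ : ℕ) = (z₁ : ℕ) / n * n + (z₂ : ℕ) % n)
    (y : Fin (n * n) → ℝ)
    (hy : y = x - Pi.single z₁ 1 - Pi.single z₂ 1 + Pi.single z₃ 1 + Pi.single z₄ 1) :
    y ⬝ᵥ Q.mulVec y - x ⬝ᵥ Q.mulVec x
      = 2 * (Q z₃ ⬝ᵥ y + Q z₄ ⬝ᵥ y - Q z₁ ⬝ᵥ x - Q z₂ ⬝ᵥ x) := by
  have hn : 0 < n := Nat.pos_of_mul_pos_left z₁.pos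
  -- entries of Q
  have hQe : ∀ z w : Fin (n * n), Q z w =
      (1/2) * (D z.divNat w.divNat * F z.modNat w.modNat)
      + (1/2) * (D w.divNat z.divNat * F w.modNat z.modNat) := by
    intro z w
    simp [hQ, Qflat, Matrix.reindex_apply, Matrix.kroneckerMap_apply]
  -- div/mod identities
  have hd3 : z₃.divNat = z₂.divNat := by
    apply Fin.ext
    simp only [Fin.coe_divNat, h3]
    rw [Nat.add_comm, Nat.add_mul_div_right _ _ hn,
      Nat.div_eq_of_lt (Nat.mod_lt _ hn), Nat.zero_add]
  have hm3 : z₃.modNat = z₁.modNat := by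
    apply Fin.ext
    simp only [Fin.coe_modNat, h3]
    rw [Nat.add_comm, Nat.add_mul_mod_self_right, Nat.mod_mod_of_dvd _ dvd_rfl]
  have hd4 : z₄.divNat = z₁.divNat := by
    apply Fin.ext
    simp only [Fin.coe_divNat, h4]
    rw [Nat.add_comm, Nat.add_mul_div_right _ _ hn,
      Nat.div_eq_of_lt (Nat.mod_lt _ hn), Nat.zero_add]
  have hm4 : z₄.modNat = z₂.modNat := by
    apply Fin.ext
    simp only [Fin.coe_modNat, h4]
    rw [Nat.add_comm, Nat.add_mul_mod_self_right, Nat.mod_mod_of_dvd _ dvd_rfl]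
  have hFs : ∀ i j, F i j = F j i := by
    intro i j
    conv_lhs => rw [← hF]
    rfl
  -- symmetry of Q
  have hsym : ∀ i j, Q i j = Q j i := by
    intro i j
    rw [hQe, hQe]; ring
  -- the key entry cancellation
  have hS : (Q z₁ z₃ + Q z₁ z₄ - Q z₁ z₁ - Q z₁ z₂)
      + (Q z₂ z₃ + Q z₂ z₄ - Q z₂ z₁ - Q z₂ z₂)
      + (Q z₃ z₃ + Q z₃ z₄ - Q z₃ z₁ - Q z₃ z₂)
      + (Q z₄ z₃ + Q z₄ z₄ - Q z₄ z₁ - Q z₄ z₂) = 0 := by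
    simp only [hQe, hd3, hm3, hd4, hm4, hDd, hFd, hFs z₂.modNat z₁.modNat]
    ring
  -- bilinear form facts
  have hrow : ∀ (z : Fin (n*n)) (v : Fin (n*n) → ℝ),
      Pi.single z (1:ℝ) ⬝ᵥ Q.mulVec v = Q z ⬝ᵥ v := by
    intro z v; simp [Matrix.mulVec]
  have hB : ∀ v w : Fin (n*n) → ℝ, v ⬝ᵥ Q.mulVec w = w ⬝ᵥ Q.mulVec v := by
    intro v w
    rw [Matrix.dotProduct_mulVec, ← Matrix.mulVec_transpose]
    have : Qᵀ = Q := by ext i j; exact hsym j i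
    rw [this, dotProduct_comm]
  have hcol : ∀ z w : Fin (n*n), Q z ⬝ᵥ Pi.single w (1:ℝ) = Q z w := by
    intro z w; simp
  -- expand
  subst hy
  set e₁ := (Pi.single z₁ 1 : Fin (n*n) → ℝ)
  set e₂ := (Pi.single z₂ 1 : Fin (n*n) → ℝ)
  set e₃ := (Pi.single z₃ 1 : Fin (n*n) → ℝ)
  set e₄ := (Pi.single z₄ 1 : Fin (n*n) → ℝ)
  set yv := x - e₁ - e₂ + e₃ + e₄ with hyv
  have hexpand : ∀ v : Fin (n*n) → ℝ, yv ⬝ᵥ Q.mulVec v =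
      x ⬝ᵥ Q.mulVec v - Q z₁ ⬝ᵥ v - Q z₂ ⬝ᵥ v + Q z₃ ⬝ᵥ v + Q z₄ ⬝ᵥ v := by
    intro v
    rw [hyv]
    simp only [add_dotProduct, sub_dotProduct, e₁, e₂, e₃, e₄, hrow]
  have hexpand2 : ∀ z : Fin (n*n), Q z ⬝ᵥ yv =
      Q z ⬝ᵥ x - Q z z₁ - Q z z₂ + Q z z₃ + Q z z₄ := by
    intro z
    rw [hyv]
    simp only [dotProduct_add, dotProduct_sub, e₁, e₂, e₃, e₄, hcol]
  have h5 : yv ⬝ᵥ Q.mulVec yv =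
      x ⬝ᵥ Q.mulVec yv - Q z₁ ⬝ᵥ yv - Q z₂ ⬝ᵥ yv + Q z₃ ⬝ᵥ yv + Q z₄ ⬝ᵥ yv :=
    hexpand yv
  have h6 : x ⬝ᵥ Q.mulVec yv =
      x ⬝ᵥ Q.mulVec x - Q z₁ ⬝ᵥ x - Q z₂ ⬝ᵥ x + Q z₃ ⬝ᵥ x + Q z₄ ⬝ᵥ x := by
    rw [hB x yv, hexpand x]
  rw [h5, h6, hexpand2 z₁, hexpand2 z₂, hexpand2 z₃, hexpand2 z₄]
  linarith [hS]
end

section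
/- For a vectorized n×n permutation matrix x, the union over all tuples (z₁, z₂, z₃, z₄) ∈ 𝒩(x) of the pairs {z₁, z₂} equals supp(x), and the union of the pairs {z₃, z₄} equals the complement {0,…,n²−1} \ supp(x), provided n ≥ 2. -/
open Matrix

def FullNbhd {n : ℕ} (x : Fin (n * n) → ℝ) :
    Set (Fin (n * n) × Fin (n * n) × Fin (n * n) × Fin (n * n)) :=
  {t | x t.1 = 1 ∧ x t.2.1 = 1 ∧ (t.1 : ℕ) < (t.2.1 : ℕ) ∧
    (t.2.2.1 : ℕ) = (t.2.1 : ℕ) / n * n + (t.1 : ℕ) % n ∧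
    (t.2.2.2 : ℕ) = (t.1 : ℕ) / n * n + (t.2.1 : ℕ) % n}

/-! Index `Fin (n * n)` by (row, column) = `(z / n, z % n)`; then `𝒩(x)` sends a pair
`z₁ < z₂` of the support to the two other corners `(row z₂, col z₁)`, `(row z₁, col z₂)`
of the rectangle they span. Distinct support entries of a permutation matrix lie in distinct
rows and columns, so these corners are off the support. Conversely an off-support cell
`(r, c)` is the corner of the rectangle spanned by the support entries in row `r` and in
column `c`, and, as `n ≥ 2`, every support entry has a partner in another row. -/

section Cells

variable {m n : ℕ}

@[simp]
theorem Fin.divNat_finProdFinEquiv (p : Fin m × Fin n) : (finProdFinEquiv p).divNat = p.1 :=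
  congrArg Prod.fst (finProdFinEquiv.symm_apply_apply p)

@[simp]
theorem Fin.modNat_finProdFinEquiv (p : Fin m × Fin n) : (finProdFinEquiv p).modNat = p.2 :=
  congrArg Prod.snd (finProdFinEquiv.symm_apply_apply p)

theorem Fin.ext_divNat_modNat {a b : Fin (m * n)} (hdiv : a.divNat = b.divNat)
    (hmod : a.modNat = b.modNat) : a = b :=
  finProdFinEquiv.symm.injective (Prod.ext hdiv hmod)

def crossCell (a b : Fin (m * n)) : Fin (m * n) :=
  finProdFinEquiv (a.divNat, b.modNat)

@[simp]
theorem divNat_crossCell (a b : Fin (m * n)) : (crossCell a b).divNat = a.divNat :=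
  Fin.divNat_finProdFinEquiv _

@[simp]
theorem modNat_crossCell (a b : Fin (m * n)) : (crossCell a b).modNat = b.modNat :=
  Fin.modNat_finProdFinEquiv _

theorem val_crossCell (a b : Fin (m * n)) : (crossCell a b : ℕ) = a / n * n + b % n := by
  simp only [crossCell, finProdFinEquiv_apply_val, Fin.coe_divNat, Fin.coe_modNat]
  ring

end Cells

section FullNbhd

variable {n : ℕ} {x : Fin (n * n) → ℝ}

theorem crossCell_eq_of_mem_fullNbhd
    {t : Fin (n * n) × Fin (n * n) × Fin (n * n) × Fin (n * n)} (ht : t ∈ FullNbhd x) :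
    t.2.2.1 = crossCell t.2.1 t.1 ∧ t.2.2.2 = crossCell t.1 t.2.1 :=
  ⟨Fin.ext (ht.2.2.2.1.trans (val_crossCell _ _).symm),
    Fin.ext (ht.2.2.2.2.trans (val_crossCell _ _).symm)⟩

theorem mk_mem_fullNbhd {a b : Fin (n * n)} (ha : x a = 1) (hb : x b = 1) (hab : a < b) :
    (a, b, crossCell b a, crossCell a b) ∈ FullNbhd x :=
  ⟨ha, hb, hab, val_crossCell b a, val_crossCell a b⟩

theorem exists_mem_fullNbhd_of_ne {a b : Fin (n * n)} (ha : x a = 1) (hb : x b = 1)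
    (hab : a ≠ b) : ∃ t ∈ FullNbhd x,
      (a = t.1 ∨ a = t.2.1) ∧ (crossCell a b = t.2.2.1 ∨ crossCell a b = t.2.2.2) := by
  rcases hab.lt_or_gt with h | h
  · exact ⟨_, mk_mem_fullNbhd ha hb h, Or.inl rfl, Or.inr rfl⟩
  · exact ⟨_, mk_mem_fullNbhd hb ha h, Or.inr rfl, Or.inl rfl⟩

end FullNbhd

namespace IsPermVec

variable {n : ℕ} {x : Fin (n * n) → ℝ}

theorem exists_perm (hx : IsPermVec x) :
    ∃ σ : Equiv.Perm (Fin n), ∀ z, x z = 1 ↔ z.modNat = σ z.divNat := by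
  obtain ⟨σ, hσ⟩ := hx
  refine ⟨σ, fun z => ?_⟩
  rw [hσ]
  split_ifs with h <;> simp [h]

variable {σ : Equiv.Perm (Fin n)}

theorem divNat_ne_of_ne (hσ : ∀ z, x z = 1 ↔ z.modNat = σ z.divNat)
    {a b : Fin (n * n)} (ha : x a = 1) (hb : x b = 1) (hab : a ≠ b) :
    a.divNat ≠ b.divNat := fun hdiv =>
  hab (Fin.ext_divNat_modNat hdiv (by rw [(hσ a).1 ha, (hσ b).1 hb, hdiv]))

theorem crossCell_apply_ne_one (hσ : ∀ z, x z = 1 ↔ z.modNat = σ z.divNat)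
    {a b : Fin (n * n)} (ha : x a = 1) (hb : x b = 1) (hab : a ≠ b) :
    x (crossCell a b) ≠ 1 := by
  rw [Ne, hσ, divNat_crossCell, modNat_crossCell, (hσ b).1 hb]
  exact fun h => divNat_ne_of_ne hσ ha hb hab (σ.injective h).symm

theorem exists_apply_eq_one_ne (hσ : ∀ z, x z = 1 ↔ z.modNat = σ z.divNat) (hn : 2 ≤ n)
    (i : Fin (n * n)) : ∃ j, x j = 1 ∧ j ≠ i := by
  have : Nontrivial (Fin n) := Fin.nontrivial_iff_two_le.mpr hn
  obtain ⟨r, hr⟩ := exists_ne i.divNat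
  refine ⟨finProdFinEquiv (r, σ r), by simp [hσ], fun h => hr ?_⟩
  simpa using congrArg Fin.divNat h

theorem exists_crossCell_eq (hσ : ∀ z, x z = 1 ↔ z.modNat = σ z.divNat) {i : Fin (n * n)}
    (hi : x i ≠ 1) :
    ∃ a b, x a = 1 ∧ x b = 1 ∧ a ≠ b ∧ crossCell a b = i := by
  set a := finProdFinEquiv (i.divNat, σ i.divNat)
  set b := finProdFinEquiv (σ.symm i.modNat, i.modNat)
  have hcross : crossCell a b = i := Fin.ext_divNat_modNat (by simp [a]) (by simp [b])
  refine ⟨a, b, by simp [a, hσ], by simp [b, hσ], fun hab => hi ?_, hcross⟩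
  rw [← hcross, hab, hσ]
  simp [b]

end IsPermVec

/-- The union of the pairs `{z₁, z₂}` over all tuples of `𝒩(x)` is `supp(x)`,
and the union of the pairs `{z₃, z₄}` is the complement of `supp(x)`. -/
theorem fullNbhd_unions {n : ℕ} (hn : 2 ≤ n)
    (x : Fin (n * n) → ℝ) (hx : IsPermVec x) :
    {i : Fin (n * n) | ∃ t ∈ FullNbhd x, i = t.1 ∨ i = t.2.1} = {i | x i = 1} ∧
    {i : Fin (n * n) | ∃ t ∈ FullNbhd x, i = t.2.2.1 ∨ i = t.2.2.2} = {i | x i = 1}ᶜ := by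
  obtain ⟨σ, hσ⟩ := hx.exists_perm
  constructor
  · ext i
    refine ⟨fun ⟨t, ht, hi⟩ => hi.elim (· ▸ ht.1) (· ▸ ht.2.1), fun hi => ?_⟩
    obtain ⟨j, hj, hji⟩ := IsPermVec.exists_apply_eq_one_ne hσ hn i
    obtain ⟨t, ht, hit, -⟩ := exists_mem_fullNbhd_of_ne hi hj hji.symm
    exact ⟨t, ht, hit⟩
  · ext i
    constructor
    · rintro ⟨t, ht, hi⟩
      have hne : t.1 ≠ t.2.1 := Fin.ne_of_lt ht.2.2.1
      obtain ⟨h₃, h₄⟩ := crossCell_eq_of_mem_fullNbhd ht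
      rcases hi with rfl | rfl
      · exact h₃ ▸ IsPermVec.crossCell_apply_ne_one hσ ht.2.1 ht.1 hne.symm
      · exact h₄ ▸ IsPermVec.crossCell_apply_ne_one hσ ht.1 ht.2.1 hne
    · intro hi
      obtain ⟨a, b, ha, hb, hab, rfl⟩ := IsPermVec.exists_crossCell_eq hσ hi
      obtain ⟨t, ht, -, hcross⟩ := exists_mem_fullNbhd_of_ne ha hb hab
      exact ⟨t, ht, hcross⟩
end
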